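/- The complement in X₁ of the single point given by the class of (0,0) (equivalently, of (0,1)) is not connected. -/

import Mathlib

/-!
Away from the node, a point of `X₁` remembers which sphere it lies on: the three
identifications never glue a point with nonzero first coordinate to the other sphere, nor to
the node. Hence the complement of the node is the union of the two punctured spheres, which
are disjoint, nonempty and open in `X₁`.
-/

open OnePoint

/-- Identifications `(0,0)∼(0,1)`, `(1,0)∼(2,0)`, `(1,1)∼(2,1)` on `S × Fin 2`. -/
def relEx3₁ : OnePoint ℂ × Fin 2 → OnePoint ℂ × Fin 2 → Prop := fun a b =>
  (a = (((0 : ℂ) : OnePoint ℂ), 0) ∧ b = (((0 : ℂ) : OnePoint ℂ), 1)) ∨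
  (a = (((1 : ℂ) : OnePoint ℂ), 0) ∧ b = (((2 : ℂ) : OnePoint ℂ), 0)) ∨
  (a = (((1 : ℂ) : OnePoint ℂ), 1) ∧ b = (((2 : ℂ) : OnePoint ℂ), 1))

theorem not_isPreconnected_union_of_disjoint {X : Type*} [TopologicalSpace X] {u v : Set X}
    (hu : IsOpen u) (hv : IsOpen v) (huv : Disjoint u v) (hu' : u.Nonempty)
    (hv' : v.Nonempty) : ¬ IsPreconnected (u ∪ v) := by
  intro h
  obtain hvu | huv' := h.subset_or_subset hu hv huv subset_rfl
  · obtain ⟨x, hx⟩ := hv'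
    exact huv.ne_of_mem (hvu (Or.inr hx)) hx rfl
  · obtain ⟨x, hx⟩ := hu'
    exact huv.ne_of_mem hx (huv' (Or.inl hx)) rfl

namespace X₁

def OffNode (i : Fin 2) (a : OnePoint ℂ × Fin 2) : Prop :=
  a.1 ≠ ((0 : ℂ) : OnePoint ℂ) ∧ a.2 = i

theorem offNode_eq_of_rel (i : Fin 2) {a b : OnePoint ℂ × Fin 2} (h : relEx3₁ a b) :
    OffNode i a = OffNode i b := by
  rcases h with ⟨rfl, rfl⟩ | ⟨rfl, rfl⟩ | ⟨rfl, rfl⟩ <;> simp [OffNode]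

def node : Quot relEx3₁ := Quot.mk _ (((0 : ℂ) : OnePoint ℂ), 0)

def sheet (i : Fin 2) : Set (Quot relEx3₁) :=
  {q | Quot.lift (OffNode i) (fun _ _ => offNode_eq_of_rel i) q}

theorem mk_mem_sheet {i : Fin 2} {a : OnePoint ℂ × Fin 2} :
    Quot.mk _ a ∈ sheet i ↔ OffNode i a :=
  Iff.rfl

theorem isOpen_sheet (i : Fin 2) : IsOpen (sheet i) := by
  rw [← isQuotientMap_quot_mk.isOpen_preimage]
  change IsOpen ({((0 : ℂ) : OnePoint ℂ)}ᶜ ×ˢ {i})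
  exact isClosed_singleton.isOpen_compl.prod (isOpen_discrete _)

theorem disjoint_sheet_zero_one : Disjoint (sheet 0) (sheet 1) := by
  rw [Set.disjoint_left]
  intro q
  obtain ⟨a, rfl⟩ := Quot.exists_rep q
  rintro ⟨-, h0⟩ ⟨-, h1⟩
  exact absurd (h0.symm.trans h1) (by decide)

theorem sheet_nonempty (i : Fin 2) : (sheet i).Nonempty :=
  ⟨Quot.mk _ (((1 : ℂ) : OnePoint ℂ), i), mk_mem_sheet.2 ⟨by simp, rfl⟩⟩

theorem mk_zero_eq_node (i : Fin 2) : Quot.mk relEx3₁ (((0 : ℂ) : OnePoint ℂ), i) = node := by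
  fin_cases i
  · rfl
  · exact (Quot.sound (show relEx3₁ _ _ from Or.inl ⟨rfl, rfl⟩)).symm

theorem node_notMem_sheet (i : Fin 2) : node ∉ sheet i := by
  simp [node, mk_mem_sheet, OffNode]

theorem compl_node_eq_union_sheet : {node}ᶜ = sheet 0 ∪ sheet 1 := by
  ext q
  obtain ⟨⟨x, i⟩, rfl⟩ := Quot.exists_rep q
  constructor
  · intro hq
    have hx : x ≠ ((0 : ℂ) : OnePoint ℂ) := by
      rintro rfl
      exact hq (mk_zero_eq_node i)
    fin_cases i
    · exact Or.inl ⟨hx, rfl⟩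
    · exact Or.inr ⟨hx, rfl⟩
  · rintro (h | h) (hq : _ = node) <;> exact node_notMem_sheet _ (hq ▸ h)

end X₁

open X₁ in
/-- the complement in `X₁ = Quot relEx3₁` of the class of `(0,0)` is not
connected. -/
theorem double_cover_statement_14 :
    ¬ IsConnected ({Quot.mk relEx3₁ (((0 : ℂ) : OnePoint ℂ), 0)}ᶜ : Set (Quot relEx3₁)) := by
  intro h
  have h' : IsPreconnected (sheet 0 ∪ sheet 1) := compl_node_eq_union_sheet ▸ h.isPreconnected
  exact not_isPreconnected_union_of_disjoint (isOpen_sheet 0) (isOpen_sheet 1)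
    disjoint_sheet_zero_one (sheet_nonempty 0) (sheet_nonempty 1) h'
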